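/- arXiv:1712.10213 — 2 statements merged into one kernel-verified Lean document; each statement's English description precedes it below -/
import Mathlib

section
/- Timed traces are closed under concatenation: if tt₁ and tt₂ are partial functions ℝ≥0 →. Σ with domains [0,m) and [0,n) respectively (Σ a topological space), then tt₁ and tt₂ are both timed traces (piecewise continuous in the sense of the definition) if and only if tt₁ ⌢ tt₂ is a timed trace. -/
open scoped Classical

/-- Right-shift of a partial function on ℝ≥0: domain shifted right by `n`,
with `(f ≫ n) x = f (x - n)`. -/
noncomputable def pShift {σ : Type*} (f : NNReal →. σ) (n : NNReal) : NNReal →. σ :=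
  fun x => if n ≤ x then f (x - n) else Part.none

/-- Union of two partial functions (intended for disjoint domains):
agrees with `f` on `f.Dom` and with `g` elsewhere. -/
noncomputable def pUnion {σ : Type*} (f g : NNReal →. σ) : NNReal →. σ :=
  fun x => if x ∈ f.Dom then f x else g x

/-- The end point of a partial function whose domain is `[0, t)`. -/
noncomputable def tend {σ : Type*} (f : NNReal →. σ) : NNReal :=
  sInf {x | x ∉ f.Dom}

/-- Concatenation: `f ⌢ g = f ∪ (g ≫ end f)`. -/
noncomputable def pCat {σ : Type*} (f g : NNReal →. σ) : NNReal →. σ :=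
  pUnion f (pShift g (tend f))

/-- `F` is right-continuous on `[a, b)`. -/
def ContOnIco {σ : Type*} [TopologicalSpace σ] (F : NNReal → σ) (a b : NNReal) : Prop :=
  ∀ s ∈ Set.Ico a b, Filter.Tendsto F (nhdsWithin s (Set.Ioi s)) (nhds (F s))

/-- A timed trace: a partial function with domain `[0, t)`, piecewise
right-continuous with respect to a finite strictly increasing sequence of
instants `I` containing `0` and `t` and contained in `[0, t]`. -/
def IsTimedTrace {σ : Type*} [TopologicalSpace σ] (f : NNReal →. σ) : Prop :=
  ∃ t : NNReal, f.Dom = Set.Iio t ∧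
    (0 < t → ∃ (I : List NNReal) (F : NNReal → σ),
      (∀ x (hx : x ∈ f.Dom), f x = Part.some (F x)) ∧
      I.Pairwise (· < ·) ∧ (∀ i ∈ I, i ≤ t) ∧ (0 : NNReal) ∈ I ∧ t ∈ I ∧
      ∀ (k : ℕ) (hk : k + 1 < I.length),
        ContOnIco F (I.get ⟨k, Nat.lt_of_succ_lt hk⟩) (I.get ⟨k + 1, hk⟩))


/-!
Right-continuity is a pointwise condition, so the partition in the definition of a timed trace is
irrelevant: `f` is a timed trace on `[0, t)` iff it has a total extension that is right-continuous
at every point of `[0, t)`. Extensions of `f` on `[0, m)` and of `g` on `[0, n)` glue to one of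
`f ⌢ g` on `[0, m + n)`, since right-continuity at `s < m` only sees values near `s`, below `m`, and
right-continuity at `s ≥ m` only sees values above `m`. Conversely, an extension of `f ⌢ g`
restricts to one of `f` and, shifted left by `m`, to one of `g`.
-/

open Set

theorem List.exists_get_le_lt_get_succ {α : Type*} [LinearOrder α] :
    ∀ {I : List α}, I.Pairwise (· ≤ ·) → ∀ {a b s : α}, a ∈ I → b ∈ I → a ≤ s → s < b →
      ∃ (k : ℕ) (hk : k + 1 < I.length),
        I.get ⟨k, Nat.lt_of_succ_lt hk⟩ ≤ s ∧ s < I.get ⟨k + 1, hk⟩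
  | [], _, _, _, _, ha, _, _, _ => absurd ha List.not_mem_nil
  | x :: I, hI, a, b, s, ha, hb, has, hsb => by
    rw [List.pairwise_cons] at hI
    have hxs : x ≤ s := by
      rcases List.mem_cons.mp ha with rfl | ha
      exacts [has, (hI.1 a ha).trans has]
    have hbI : b ∈ I := (List.mem_cons.mp hb).resolve_left (hxs.trans_lt hsb).ne'
    match I, hI, hbI with
    | y :: I, hI, hbI =>
      by_cases hsy : s < y
      · exact ⟨0, by simp, hxs, hsy⟩
      · obtain ⟨k, hk, hks, hsk⟩ :=
          exists_get_le_lt_get_succ hI.2 List.mem_cons_self hbI (not_lt.mp hsy) hsb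
        exact ⟨k + 1, by simpa using hk, hks, hsk⟩

section Concatenation

variable {σ : Type*} {f g : NNReal →. σ} {m n : NNReal}

theorem tend_of_dom_eq_Iio (hf : f.Dom = Iio m) : tend f = m := by
  have h : {x | x ∉ f.Dom} = Ici m := by
    ext x
    simp [hf]
  rw [tend, h, csInf_Ici]

theorem pCat_apply_of_lt (hf : f.Dom = Iio m) {x : NNReal} (hx : x < m) :
    pCat f g x = f x := by
  have h : x ∈ f.Dom := hf ▸ hx
  simp [pCat, pUnion, h]

theorem pCat_apply_of_le (hf : f.Dom = Iio m) {x : NNReal} (hx : m ≤ x) :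
    pCat f g x = g (x - m) := by
  have h : x ∉ f.Dom := by simpa [hf] using hx
  simp [pCat, pUnion, h, pShift, tend_of_dom_eq_Iio hf, hx]

theorem pCat_apply_add (hf : f.Dom = Iio m) (x : NNReal) : pCat f g (x + m) = g x := by
  rw [pCat_apply_of_le hf le_add_self, add_tsub_cancel_right]

theorem dom_pCat (hf : f.Dom = Iio m) (hg : g.Dom = Iio n) :
    (pCat f g).Dom = Iio (m + n) := by
  ext x
  change (pCat f g x).Dom ↔ x < m + n
  rcases lt_or_ge x m with hx | hx
  · rw [pCat_apply_of_lt hf hx]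
    exact iff_of_true (hf ▸ hx : x ∈ f.Dom) (hx.trans_le le_self_add)
  · rw [pCat_apply_of_le hf hx, ← tsub_lt_iff_left hx]
    exact Set.ext_iff.mp hg (x - m)

end Concatenation

section RightContExtension

variable {σ : Type*} [TopologicalSpace σ] {f g h : NNReal →. σ} {m n t : NNReal}

def HasRightContExtension (f : NNReal →. σ) (t : NNReal) : Prop :=
  ∃ F : NNReal → σ, (∀ x < t, f x = Part.some (F x)) ∧ ∀ x < t, ContinuousWithinAt F (Ioi x) x

theorem isTimedTrace_iff (hf : f.Dom = Iio m) :
    IsTimedTrace f ↔ (0 < m → HasRightContExtension f m) := by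
  constructor
  · rintro ⟨t, hft, htrace⟩ hm
    obtain rfl : t = m := (Iio_subset_Iio_iff.mp (hft ▸ hf).le).antisymm
      (Iio_subset_Iio_iff.mp (hft ▸ hf).ge)
    obtain ⟨I, F, hfF, hI, -, h0, ht, hcont⟩ := htrace hm
    refine ⟨F, fun x hx => hfF x (hft ▸ hx), fun s hs => ?_⟩
    obtain ⟨k, hk, hks, hsk⟩ :=
      List.exists_get_le_lt_get_succ (hI.imp le_of_lt) h0 ht zero_le hs
    exact hcont k hk s ⟨hks, hsk⟩
  · intro hext
    refine ⟨m, hf, fun hm => ?_⟩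
    obtain ⟨F, hfF, hcont⟩ := hext hm
    refine ⟨[0, m], F, fun x hx => hfF x ((Set.ext_iff.mp hf x).mp hx), by simp [hm], by simp,
      by simp, by simp, fun k hk => ?_⟩
    obtain rfl : k = 0 := by simpa using hk
    exact fun s hs => hcont s hs.2

theorem HasRightContExtension.nonempty (hf : HasRightContExtension f t) : Nonempty σ :=
  let ⟨F, _⟩ := hf
  ⟨F 0⟩

theorem HasRightContExtension.of_pos_imp [Nonempty σ] (hf : 0 < t → HasRightContExtension f t) :
    HasRightContExtension f t := by
  rcases (zero_le : 0 ≤ t).eq_or_lt with rfl | ht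
  · exact ⟨fun _ => Classical.arbitrary σ, fun _ hx => absurd hx not_lt_zero,
      fun _ hx => absurd hx not_lt_zero⟩
  · exact hf ht

theorem HasRightContExtension.of_shift (hh : HasRightContExtension h t) {c s : NNReal}
    (hst : s + c ≤ t) (hg : ∀ x < s, g x = h (x + c)) : HasRightContExtension g s := by
  obtain ⟨F, hhF, hcont⟩ := hh
  have hlt {x : NNReal} (hx : x < s) : x + c < t := (add_lt_add_left hx c).trans_le hst
  refine ⟨fun x => F (x + c), fun x hx => (hg x hx).trans (hhF _ (hlt hx)), fun x hx => ?_⟩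
  exact (hcont _ (hlt hx)).comp (f := (· + c)) (continuous_add_const c).continuousWithinAt
    fun y hy => add_lt_add_left (mem_Ioi.mp hy) c

theorem HasRightContExtension.pCat (hfm : f.Dom = Iio m) (hf : HasRightContExtension f m)
    (hg : HasRightContExtension g n) : HasRightContExtension (pCat f g) (m + n) := by
  obtain ⟨Ff, hfF, hFf⟩ := hf
  obtain ⟨Fg, hgG, hFg⟩ := hg
  refine ⟨fun x => if x < m then Ff x else Fg (x - m), fun x hx => ?_, fun s hs => ?_⟩
  · dsimp only
    rcases lt_or_ge x m with hxm | hxm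
    · rw [pCat_apply_of_lt hfm hxm, if_pos hxm, hfF x hxm]
    · rw [pCat_apply_of_le hfm hxm, if_neg (not_lt.mpr hxm),
        hgG _ (tsub_lt_iff_left hxm |>.mpr hx)]
  · rcases lt_or_ge s m with hsm | hsm
    · refine (hFf s hsm).congr_of_eventuallyEq ?_ (if_pos hsm)
      filter_upwards [nhdsWithin_le_nhds (isOpen_Iio.mem_nhds hsm)] with x hx
      exact if_pos hx
    · have hshift : ContinuousWithinAt (fun x => Fg (x - m)) (Ioi s) s :=
        (hFg _ (tsub_lt_iff_left hsm |>.mpr hs)).comp (f := (· - m))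
          (continuous_sub_right m).continuousWithinAt
          fun x hx => tsub_lt_tsub_right_of_le hsm hx
      refine hshift.congr (fun x hx => if_neg ?_) (if_neg hsm.not_gt)
      exact (hsm.trans_lt hx).not_gt

end RightContExtension

theorem timed_trace_cat_closure {σ : Type*} [TopologicalSpace σ]
    (f g : NNReal →. σ) (m n : NNReal)
    (hf : f.Dom = Set.Iio m) (hg : g.Dom = Set.Iio n) :
    (IsTimedTrace f ∧ IsTimedTrace g) ↔ IsTimedTrace (pCat f g) := by
  rw [isTimedTrace_iff hf, isTimedTrace_iff hg, isTimedTrace_iff (dom_pCat hf hg)]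
  constructor
  · rintro ⟨hfext, hgext⟩ hmn
    -- An empty piece has an extension as soon as `σ` is inhabited, which the other piece ensures.
    have : Nonempty σ := by
      rcases add_pos_iff.mp hmn with hm | hn
      exacts [(hfext hm).nonempty, (hgext hn).nonempty]
    exact (HasRightContExtension.of_pos_imp hfext).pCat hf (.of_pos_imp hgext)
  · intro hext
    constructor
    · refine fun hm => (hext (hm.trans_le le_self_add)).of_shift (c := 0) (by simp) fun x hx => ?_
      rw [add_zero, pCat_apply_of_lt hf hx]
    · exact fun hn => (hext (hn.trans_le le_add_self)).of_shift (add_comm n m).le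
        fun x _ => (pCat_apply_add hf x).symm
end

section
/- For relations P over a state including trace variables tr, tr' valued in a trace algebra, the healthiness conditions R1(P) := P ∧ tr ≤ tr' and R2c(P) := (P[ε, tr'−tr / tr, tr'] ◁ tr ≤ tr' ▷ P) satisfy: R1(R2c(P)) holds of a state pair iff there exists t such that P holds with tr := ε and tr' := t, and tr' = tr ⌢ t. -/
structure TraceAlgebra (T : Type*) where
  op : T → T → T
  ε : T
  assoc : ∀ x y z, op x (op y z) = op (op x y) z
  unit_left : ∀ x, op ε x = x
  unit_right : ∀ x, op x ε = x
  cancel_left : ∀ x y z, op x y = op x z → y = z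
  cancel_right : ∀ x y z, op x z = op y z → x = y
  no_inv : ∀ x y, op x y = ε → x = ε

def TraceAlgebra.le {T : Type*} (A : TraceAlgebra T) (x y : T) : Prop :=
  ∃ z, y = A.op x z

open Classical in
noncomputable def TraceAlgebra.sub {T : Type*} (A : TraceAlgebra T) (y x : T) : T :=
  if h : A.le x y then Classical.choose h else A.ε

/-- UTP conditional: `(b ∧ P) ∨ (¬ b ∧ Q)`. -/
def utpCond (P : Prop) (b : Prop) (Q : Prop) : Prop := (b ∧ P) ∨ (¬ b ∧ Q)

/-- States are pairs of a trace component and the rest of the state. -/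
def R1 {T Γ : Type*} (A : TraceAlgebra T) (P : (T × Γ) → (T × Γ) → Prop)
    (s s' : T × Γ) : Prop :=
  P s s' ∧ A.le s.1 s'.1

noncomputable def R2c {T Γ : Type*} (A : TraceAlgebra T)
    (P : (T × Γ) → (T × Γ) → Prop) (s s' : T × Γ) : Prop :=
  utpCond (P (A.ε, s.2) (A.sub s'.1 s.1, s'.2)) (A.le s.1 s'.1) (P s s')

theorem R1_R2c_trace_contribution {T Γ : Type*} (A : TraceAlgebra T)
    (P : (T × Γ) → (T × Γ) → Prop) (s s' : T × Γ) :
    R1 A (R2c A P) s s' ↔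
      ∃ t : T, P (A.ε, s.2) (t, s'.2) ∧ s'.1 = A.op s.1 t := by
  constructor
  · rintro ⟨hP, hle⟩
    rcases hP with ⟨_, hP⟩ | ⟨hn, _⟩
    · refine ⟨A.sub s'.1 s.1, hP, ?_⟩
      rw [TraceAlgebra.sub, dif_pos hle]
      exact Classical.choose_spec hle
    · exact absurd hle hn
  · rintro ⟨t, hP, ht⟩
    have hle : A.le s.1 s'.1 := ⟨t, ht⟩
    have hsub : A.sub s'.1 s.1 = t := by
      rw [TraceAlgebra.sub, dif_pos hle]
      exact A.cancel_left s.1 _ _ ((Classical.choose_spec hle).symm.trans ht)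
    exact ⟨Or.inl ⟨hle, hsub ▸ hP⟩, hle⟩
end
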